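/- Let (0, a₄, a₅, θ) ∈ ℂ⁴ with a₄ ≠ 0 and a₅ ≠ 0. Then there exist A, B ∈ ℂ with A(A+B) ≠ 0 and λ ∈ ℂ such that S_{A,B}(0, a₄, a₅, θ) = (0, 1, 1, λ); one may take A = a₅/a₄ and A + B = a₅³/a₄⁴. -/

import Mathlib

noncomputable def S (A B : ℂ) (p : ℂ × ℂ × ℂ × ℂ) : ℂ × ℂ × ℂ × ℂ :=
  let a3 := p.1
  let a4 := p.2.1
  let a5 := p.2.2.1
  let th := p.2.2.2
  let a3' := (A + B) * a3 / A ^ 2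
  let a4' := ((A + B) * a4 - 2 * A * B * a3 * a3') / A ^ 3
  (a3', a4',
   ((A + B) * a5 - (2 * A * B * a4 + B ^ 2 * a3 ^ 2) * a3' - 3 * A ^ 2 * B * a3 * a4') / A ^ 4,
   (A * th + B * a5 - (2 * A * B * a4 + B ^ 2 * a3 ^ 2) * a3' - 3 * A ^ 2 * B * a3 * a4') / A ^ 4)

theorem S_U3_normal_form (a₄ a₅ θ : ℂ) (h4 : a₄ ≠ 0) (h5 : a₅ ≠ 0) :
    ∃ A B : ℂ, A = a₅ / a₄ ∧ A + B = a₅ ^ 3 / a₄ ^ 4 ∧ A * (A + B) ≠ 0 ∧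
      ∃ lam : ℂ, S A B (0, a₄, a₅, θ) = (0, 1, 1, lam) := by
  refine ⟨a₅ / a₄, a₅ ^ 3 / a₄ ^ 4 - a₅ / a₄, rfl, by ring, ?_, ?_⟩
  · have hAB : a₅ / a₄ + (a₅ ^ 3 / a₄ ^ 4 - a₅ / a₄) = a₅ ^ 3 / a₄ ^ 4 := by ring
    rw [hAB]
    simp only [mul_ne_zero_iff, div_ne_zero_iff]
    exact ⟨⟨h5, h4⟩, pow_ne_zero 3 h5, pow_ne_zero 4 h4⟩
  · refine ⟨(S (a₅ / a₄) (a₅ ^ 3 / a₄ ^ 4 - a₅ / a₄) (0, a₄, a₅, θ)).2.2.2, ?_⟩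
    simp only [S, Prod.mk.injEq]
    refine ⟨by field_simp; ring, ?_, ?_, trivial⟩ <;>
      · field_simp
        ring_nf
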